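/- For any finite graph G, real q ≥ 2 and w ≥ 0, we have Z_G(q,w) ≥ Z^{(2)}_G(q,w), where Z^{(2)}_G(q,w) = Σ_{S⊆V} (1+w)^{e(S)} (q−1)^{v(G)−|S|} (1 + w/(q−1))^{e(V∖S)}. For 1 < q ≤ 2 and w ≥ 0 the reverse inequality Z_G(q,w) ≤ Z^{(2)}_G(q,w) holds. -/

import Mathlib

/-!
Write `q ^ k(A) = ((q - 1) + 1) ^ k(A)` as a sum over sets `T` of components of `(V, A)` and
record `S`, the complement of the union of `T`. Then no edge of `A` crosses `(S, V ∖ S)`, and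
`Z_G = ∑_S (1 + w) ^ e(S) ∑_{B ⊆ E(V ∖ S)} (q - 1) ^ c_S(B) w ^ |B|`, where `c_S(B)` counts the
components of `(V, B)` meeting `V ∖ S`. Expanding `(1 + w / (q - 1)) ^ e(V ∖ S)` puts `Z^{(2)}_G`
in the same shape, with `(q - 1) ^ (v(G) - |S|) (w / (q - 1)) ^ |B|` as the inner term. As a graph
with `n` vertices and `m` edges has at least `n - m` components, `v(G) - |S| ≤ c_S(B) + |B|`,
and the two inner terms compare according to whether `q - 1 ≥ 1` or `q - 1 ≤ 1`.
-/

open Finset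

/-- The number of connected components of the spanning subgraph `(V, A)`. -/
noncomputable def numComponents {V : Type*} (A : Finset (Sym2 V)) : ℕ :=
  Nat.card (SimpleGraph.fromEdgeSet (↑A : Set (Sym2 V))).ConnectedComponent

/-- The partition function of the random cluster model. -/
noncomputable def rcPartition {V : Type*} [Fintype V] [DecidableEq V]
    (G : SimpleGraph V) [DecidableRel G.Adj] (q w : ℝ) : ℝ :=
  ∑ A ∈ G.edgeFinset.powerset, q ^ numComponents A * w ^ A.card

/-- The number of edges of `G` induced by the vertex set `S`. -/
noncomputable def inducedEdgeCount {V : Type*} [Fintype V] [DecidableEq V]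
    (G : SimpleGraph V) [DecidableRel G.Adj] (S : Finset V) : ℕ :=
  (G.edgeFinset.filter (fun e => ∀ v ∈ e, v ∈ S)).card

/-- The rank 2 approximation of the random cluster partition function. -/
noncomputable def rcRank2 {V : Type*} [Fintype V] [DecidableEq V]
    (G : SimpleGraph V) [DecidableRel G.Adj] (q w : ℝ) : ℝ :=
  ∑ S : Finset V, (1 + w) ^ inducedEdgeCount G S * (q - 1) ^ (Fintype.card V - S.card) *
    (1 + w / (q - 1)) ^ inducedEdgeCount G Sᶜ

theorem Finset.sum_powerset_pow_card {α R : Type*} [CommSemiring R] (s : Finset α) (x : R) :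
    ∑ t ∈ s.powerset, x ^ #t = (1 + x) ^ #s := by
  simpa [add_comm] using sum_pow_mul_eq_add_pow x 1 s

theorem Finset.sum_powerset_union_of_disjoint {α M : Type*} [DecidableEq α] [AddCommMonoid M]
    {s t : Finset α} (h : Disjoint s t) (f : Finset α → M) :
    ∑ u ∈ (s ∪ t).powerset, f u = ∑ a ∈ s.powerset, ∑ b ∈ t.powerset, f (a ∪ b) := by
  have hsplit {u : Finset α} (hu : u ∈ (s ∪ t).powerset) : u ∩ s ∪ u ∩ t = u := by
    rw [← inter_union_distrib_left, inter_eq_left.2 (mem_powerset.1 hu)]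
  rw [← sum_product']
  refine sum_nbij' (fun u => (u ∩ s, u ∩ t)) (fun p => p.1 ∪ p.2) ?_ ?_ (fun _ => hsplit) ?_
    (fun _ hu => congrArg f (hsplit hu).symm)
  · simp
  · intro p hp
    simp only [mem_product, mem_powerset] at hp ⊢
    exact union_subset_union hp.1 hp.2
  · intro p hp
    simp only [mem_product, mem_powerset] at hp
    ext x <;> simp only [mem_inter, mem_union] <;> grind [disjoint_left]

theorem Finset.disjoint_sym2_of_disjoint {α : Type*} {s t : Finset α} (h : Disjoint s t) :
    Disjoint s.sym2 t.sym2 := by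
  rw [disjoint_left]
  intro e hs ht
  induction e using Sym2.ind with | h a b => ?_
  exact disjoint_left.1 h (mem_sym2_iff.1 hs a (Sym2.mem_mk_left a b))
    (mem_sym2_iff.1 ht a (Sym2.mem_mk_left a b))

namespace SimpleGraph

variable {V : Type*} {H H' : SimpleGraph V}

theorem Reachable.mem_iff_mem {s : Set V} (hs : ∀ a b, H.Adj a b → (a ∈ s ↔ b ∈ s)) {u v : V}
    (h : H.Reachable u v) : u ∈ s ↔ v ∈ s := by
  rw [reachable_iff_reflTransGen] at h
  induction h with
  | refl => rfl
  | tail _ hab ih => exact ih.trans (hs _ _ hab)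

theorem Reachable.of_forall_adj_mem {s : Set V} (hs : ∀ a b, H'.Adj a b → a ∈ s → H.Adj a b ∧ b ∈ s)
    {u v : V} (h : H'.Reachable u v) (hu : u ∈ s) : H.Reachable u v ∧ v ∈ s := by
  rw [reachable_iff_reflTransGen] at h
  induction h with
  | refl => exact ⟨Reachable.refl u, hu⟩
  | tail _ hab ih =>
    obtain ⟨hH, hb⟩ := hs _ _ hab ih.2
    exact ⟨ih.1.trans hH.reachable, hb⟩

theorem Reachable.of_sup_edge {x y u v : V} (h : (H ⊔ edge x y).Reachable u v) :
    H.Reachable u v ∨ H.Reachable u x ∧ H.Reachable y v ∨ H.Reachable u y ∧ H.Reachable x v := by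
  rw [reachable_iff_reflTransGen] at h
  induction h with
  | refl => exact Or.inl (Reachable.refl u)
  | @tail a b _ hab ih =>
    rw [sup_adj, edge_adj] at hab
    rcases hab with hab | ⟨⟨rfl, rfl⟩ | ⟨rfl, rfl⟩, -⟩
    · have hab := hab.reachable
      rcases ih with h | ⟨h₁, h₂⟩ | ⟨h₁, h₂⟩
      exacts [.inl (h.trans hab), .inr (.inl ⟨h₁, h₂.trans hab⟩), .inr (.inr ⟨h₁, h₂.trans hab⟩)]
    all_goals
      have := Reachable.refl (G := H) a
      have := Reachable.refl (G := H) b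
      tauto

theorem ncard_image_connectedComponentMk_eq_of_le (hle : H ≤ H') {s : Set V}
    (h : ∀ u ∈ s, ∀ v ∈ s, H'.Reachable u v → H.Reachable u v) :
    (H.connectedComponentMk '' s).ncard = (H'.connectedComponentMk '' s).ncard := by
  have hmap : H'.connectedComponentMk '' s =
      ConnectedComponent.map (Hom.ofLE hle) '' (H.connectedComponentMk '' s) := by
    rw [Set.image_image]
    rfl
  rw [hmap]
  refine (Set.InjOn.ncard_image ?_).symm
  rintro _ ⟨u, hu, rfl⟩ _ ⟨v, hv, rfl⟩ huv
  simp only [ConnectedComponent.map_mk, ConnectedComponent.eq] at huv ⊢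
  exact h u hu v hv huv

theorem card_connectedComponent_le_card_sup_edge_add_one [Finite V] (x y : V) :
    Nat.card H.ConnectedComponent ≤ Nat.card (H ⊔ edge x y).ConnectedComponent + 1 := by
  set cx := H.connectedComponentMk x
  have hinj : Set.InjOn (ConnectedComponent.map (Hom.ofLE (le_sup_left (b := edge x y))))
      (Set.univ \ {cx}) := by
    rintro c hc d hd hcd
    induction c using ConnectedComponent.ind with | h u => ?_
    induction d using ConnectedComponent.ind with | h v => ?_
    simp only [Set.mem_sdiff, Set.mem_singleton_iff, ConnectedComponent.eq, cx] at hc hd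
    simp only [ConnectedComponent.map_mk, ConnectedComponent.eq] at hcd ⊢
    rcases hcd.of_sup_edge with h | ⟨h, -⟩ | ⟨-, h⟩
    exacts [h, (hc.2 h).elim, (hd.2 h.symm).elim]
  rw [← Set.ncard_univ, ← Set.ncard_sdiff_singleton_add_one (Set.mem_univ cx), ← Set.ncard_univ]
  gcongr
  exact Set.ncard_le_ncard_of_injOn _ (fun _ _ => Set.mem_univ _) hinj

end SimpleGraph

section Components

open SimpleGraph

variable {V : Type*}

noncomputable def numComponentsMeetingCompl (S : Finset V) (A : Finset (Sym2 V)) : ℕ :=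
  ((fromEdgeSet (A : Set (Sym2 V))).connectedComponentMk '' (↑S)ᶜ).ncard

variable [Fintype V] [DecidableEq V]

theorem mem_iff_mem_of_reachable_fromEdgeSet {S : Finset V} {A : Finset (Sym2 V)}
    (hA : A ⊆ S.sym2 ∪ Sᶜ.sym2) {u v : V} (h : (fromEdgeSet (A : Set (Sym2 V))).Reachable u v) :
    u ∈ S ↔ v ∈ S := by
  refine h.mem_iff_mem (s := ↑S) fun a b hab => ?_
  rw [fromEdgeSet_adj] at hab
  have := hA hab.1
  simp only [mem_union, mem_sym2_iff, Sym2.mem_iff, mem_compl] at this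
  simp only [mem_coe]
  grind

theorem pow_numComponents {R : Type*} [CommRing R] (A : Finset (Sym2 V)) (q : R) :
    q ^ numComponents A = ∑ S ∈ univ.filter (fun S : Finset V => A ⊆ S.sym2 ∪ Sᶜ.sym2),
      (q - 1) ^ numComponentsMeetingCompl S A := by
  classical
  set H := fromEdgeSet (A : Set (Sym2 V))
  have hmk : ∀ x y, s(x, y) ∈ A → H.connectedComponentMk x = H.connectedComponentMk y := by
    intro x y he
    rcases eq_or_ne x y with rfl | hxy
    · rfl
    · exact ConnectedComponent.eq.2 (Adj.reachable ((fromEdgeSet_adj _).2 ⟨he, hxy⟩))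
  have : Fintype H.ConnectedComponent := Fintype.ofFinite _
  calc q ^ numComponents A = ∑ T ∈ (univ : Finset H.ConnectedComponent).powerset, (q - 1) ^ #T := by
        rw [sum_powerset_pow_card, add_sub_cancel, card_univ, numComponents,
          Nat.card_eq_fintype_card]
    _ = _ := by
      symm
      refine sum_nbij' (fun S => Sᶜ.image H.connectedComponentMk)
        (fun T => univ.filter (fun v => H.connectedComponentMk v ∉ T)) ?_ ?_ ?_ ?_ ?_
      · simp
      · intro T _
        simp only [mem_filter, mem_univ, true_and]
        intro e he
        induction e using Sym2.ind with | h x y => ?_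
        have := hmk x y he
        simp only [mem_union, mem_sym2_iff, Sym2.mem_iff, mem_compl, mem_filter, mem_univ,
          true_and]
        grind
      · intro S hS
        simp only [mem_filter, mem_univ, true_and] at hS
        ext v
        simp only [mem_filter, mem_univ, true_and, mem_image, mem_compl, ConnectedComponent.eq,
          not_exists, not_and]
        exact ⟨fun h => by_contra fun hv => h v hv .rfl, fun hv u hu huv =>
          hu ((mem_iff_mem_of_reachable_fromEdgeSet hS huv).2 hv)⟩
      · intro T _
        ext c
        induction c using ConnectedComponent.ind with | h v => ?_
        simp only [mem_image, mem_compl, mem_filter, mem_univ, true_and, not_not]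
        exact ⟨fun ⟨u, hu, huv⟩ => huv ▸ hu, fun hv => ⟨v, hv, rfl⟩⟩
      · intro S _
        rw [numComponentsMeetingCompl, ← coe_compl, ← coe_image, Set.ncard_coe_finset]

theorem numComponentsMeetingCompl_union {S : Finset V} {A B : Finset (Sym2 V)}
    (hA : A ⊆ S.sym2) (hB : B ⊆ Sᶜ.sym2) :
    numComponentsMeetingCompl S (A ∪ B) = numComponentsMeetingCompl S B := by
  have hle : fromEdgeSet (B : Set (Sym2 V)) ≤ fromEdgeSet ↑(A ∪ B) :=
    fromEdgeSet_mono (by simp)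
  refine (ncard_image_connectedComponentMk_eq_of_le hle fun u hu v _ h =>
    (h.of_forall_adj_mem (fun a b hab ha => ?_) hu).1).symm
  rw [fromEdgeSet_adj, coe_union, Set.mem_union, mem_coe, mem_coe] at hab
  rw [Set.mem_compl_iff, mem_coe] at ha ⊢
  rcases hab with ⟨hA' | hB', hne⟩
  · exact absurd (mem_sym2_iff.1 (hA hA') a (Sym2.mem_mk_left a b)) ha
  · exact ⟨(fromEdgeSet_adj _).2 ⟨hB', hne⟩,
      mem_compl.1 (mem_sym2_iff.1 (hB hB') b (Sym2.mem_mk_right a b))⟩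

theorem numComponents_eq_card_add {S : Finset V} {B : Finset (Sym2 V)} (hB : B ⊆ Sᶜ.sym2) :
    numComponents B = #S + numComponentsMeetingCompl S B := by
  set H := fromEdgeSet (B : Set (Sym2 V))
  have hiso : ∀ u ∈ S, ∀ v, H.Reachable u v → u = v := by
    refine fun u hu v h =>
      reachable_bot.1 (h.of_forall_adj_mem (s := ↑S) (fun a b hab ha => ?_) hu).1
    rw [fromEdgeSet_adj] at hab
    have := hB hab.1
    simp only [mem_sym2_iff, Sym2.mem_iff, mem_compl] at this
    exact absurd ha (this a (.inl rfl))
  have hinj : Set.InjOn H.connectedComponentMk ↑S := fun u hu v _ h =>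
    hiso u hu v (ConnectedComponent.eq.1 h)
  have hdisj : Disjoint (H.connectedComponentMk '' ↑S) (H.connectedComponentMk '' (↑S)ᶜ) := by
    rw [Set.disjoint_left]
    rintro _ ⟨u, hu, rfl⟩ ⟨v, hv, huv⟩
    exact hv (hiso u hu v (ConnectedComponent.eq.1 huv.symm) ▸ hu)
  rw [numComponents, ← Set.ncard_univ,
    ← Set.image_univ_of_surjective (f := H.connectedComponentMk) Quot.mk_surjective,
    ← Set.union_compl_self (S : Set V), Set.image_union, Set.ncard_union_eq hdisj,
    hinj.ncard_image, Set.ncard_coe_finset]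
  rfl

theorem card_le_numComponents_add_card (A : Finset (Sym2 V)) :
    Fintype.card V ≤ numComponents A + #A := by
  induction A using Finset.induction_on with
  | empty =>
    rw [← Nat.card_eq_fintype_card, numComponents, coe_empty, fromEdgeSet_empty, card_empty]
    exact Nat.card_le_card_of_injective _ fun u v h => reachable_bot.1 (ConnectedComponent.eq.1 h)
  | @insert e A he ih =>
    induction e using Sym2.ind with | h x y => ?_
    have hsup : fromEdgeSet ↑(insert s(x, y) A) = fromEdgeSet (A : Set (Sym2 V)) ⊔ edge x y := by
      rw [coe_insert, Set.insert_eq, fromEdgeSet_union, sup_comm, edge]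
    have := card_connectedComponent_le_card_sup_edge_add_one (H := fromEdgeSet ↑A) x y
    rw [card_insert_of_notMem he, numComponents, hsup]
    unfold numComponents at ih
    omega

end Components

section PartitionFunctions

variable {V : Type*} [Fintype V] [DecidableEq V] (G : SimpleGraph V) [DecidableRel G.Adj]

theorem inducedEdgeCount_eq_card_inter (S : Finset V) :
    inducedEdgeCount G S = #(G.edgeFinset ∩ S.sym2) := by
  simp only [inducedEdgeCount, ← filter_mem_eq_inter, mem_sym2_iff]

theorem rcPartition_eq_sum (q w : ℝ) :
    rcPartition G q w = ∑ S : Finset V, (1 + w) ^ inducedEdgeCount G S *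
      ∑ B ∈ (G.edgeFinset ∩ Sᶜ.sym2).powerset,
        (q - 1) ^ numComponentsMeetingCompl S B * w ^ #B := by
  have hdisj (S : Finset V) : Disjoint (G.edgeFinset ∩ S.sym2) (G.edgeFinset ∩ Sᶜ.sym2) :=
    (disjoint_sym2_of_disjoint disjoint_compl_right).mono inter_subset_right inter_subset_right
  calc rcPartition G q w
      = ∑ A ∈ G.edgeFinset.powerset, ∑ S ∈ univ.filter (fun S : Finset V => A ⊆ S.sym2 ∪ Sᶜ.sym2),
          (q - 1) ^ numComponentsMeetingCompl S A * w ^ #A := by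
        simp only [rcPartition, pow_numComponents, sum_mul]
    _ = ∑ S : Finset V, ∑ A ∈ (G.edgeFinset ∩ S.sym2 ∪ G.edgeFinset ∩ Sᶜ.sym2).powerset,
          (q - 1) ^ numComponentsMeetingCompl S A * w ^ #A := by
        refine sum_comm' fun A S => ?_
        simp only [mem_powerset, mem_filter, mem_univ, true_and, ← inter_union_distrib_left,
          subset_inter_iff]
        tauto
    _ = ∑ S : Finset V, ∑ A ∈ (G.edgeFinset ∩ S.sym2).powerset,
          ∑ B ∈ (G.edgeFinset ∩ Sᶜ.sym2).powerset,
            (q - 1) ^ numComponentsMeetingCompl S (A ∪ B) * w ^ #(A ∪ B) := by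
        simp only [sum_powerset_union_of_disjoint (hdisj _)]
    _ = _ := by
        refine sum_congr rfl fun S _ => ?_
        rw [inducedEdgeCount_eq_card_inter, ← sum_powerset_pow_card, sum_mul]
        refine sum_congr rfl fun A hA => ?_
        rw [mul_sum]
        refine sum_congr rfl fun B hB => ?_
        rw [mem_powerset] at hA hB
        rw [numComponentsMeetingCompl_union (hA.trans inter_subset_right)
          (hB.trans inter_subset_right), card_union_of_disjoint ((hdisj S).mono hA hB), pow_add]
        ring

theorem rcRank2_eq_sum (q w : ℝ) :
    rcRank2 G q w = ∑ S : Finset V, (1 + w) ^ inducedEdgeCount G S *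
      ∑ B ∈ (G.edgeFinset ∩ Sᶜ.sym2).powerset,
        (q - 1) ^ (Fintype.card V - #S) * (w / (q - 1)) ^ #B := by
  refine sum_congr rfl fun S _ => ?_
  rw [mul_assoc, inducedEdgeCount_eq_card_inter G Sᶜ, ← sum_powerset_pow_card, mul_sum]

theorem card_sub_card_le_of_subset_compl_sym2 {S : Finset V} {B : Finset (Sym2 V)}
    (hB : B ⊆ Sᶜ.sym2) : Fintype.card V - #S ≤ numComponentsMeetingCompl S B + #B := by
  have := card_le_numComponents_add_card B
  rw [numComponents_eq_card_add hB] at this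
  omega

end PartitionFunctions

theorem pow_add_mul_div_pow {K : Type*} [Field K] {a : K} (ha : a ≠ 0) (t b : ℕ) (w : K) :
    a ^ (t + b) * (w / a) ^ b = a ^ t * w ^ b := by
  rw [pow_add, div_pow]
  field_simp

section PowerBounds

variable {K : Type*} [Field K] [LinearOrder K] [IsStrictOrderedRing K] {a w : K} {m t b : ℕ}

theorem pow_mul_div_pow_le_of_one_le (ha : 1 ≤ a) (hw : 0 ≤ w) (h : m ≤ t + b) :
    a ^ m * (w / a) ^ b ≤ a ^ t * w ^ b := by
  rw [← pow_add_mul_div_pow (by positivity) t b w]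
  gcongr

theorem pow_mul_le_pow_mul_div_pow_of_le_one (ha₀ : 0 < a) (ha : a ≤ 1) (hw : 0 ≤ w)
    (h : m ≤ t + b) : a ^ t * w ^ b ≤ a ^ m * (w / a) ^ b := by
  rw [← pow_add_mul_div_pow ha₀.ne' t b w]
  gcongr ?_ * _
  exact pow_le_pow_of_le_one ha₀.le ha h

end PowerBounds

theorem stmt_3 {V : Type*} [Fintype V] [DecidableEq V]
    (G : SimpleGraph V) [DecidableRel G.Adj] (q w : ℝ) (hw : 0 ≤ w) :
    (2 ≤ q → rcRank2 G q w ≤ rcPartition G q w) ∧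
    (1 < q → q ≤ 2 → rcPartition G q w ≤ rcRank2 G q w) := by
  have hexp {S : Finset V} {B : Finset (Sym2 V)} (hB : B ∈ (G.edgeFinset ∩ Sᶜ.sym2).powerset) :
      Fintype.card V - #S ≤ numComponentsMeetingCompl S B + #B :=
    card_sub_card_le_of_subset_compl_sym2 ((mem_powerset.1 hB).trans inter_subset_right)
  refine ⟨fun hq => ?_, fun hq₁ hq₂ => ?_⟩ <;>
    rw [rcPartition_eq_sum, rcRank2_eq_sum] <;> gcongr ∑ _, _ * ∑ _ ∈ _, ?_ with S _ B hB
  · exact pow_mul_div_pow_le_of_one_le (by linarith) hw (hexp hB)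
  · exact pow_mul_le_pow_mul_div_pow_of_le_one (by linarith) (by linarith) hw (hexp hB)
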